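/- Let N_A, N_B ≥ 2 and let ψ : Matrix (Fin N_A) (Fin N_B) ℂ, with associated pure-state density matrix ρ_ψ((m,μ),(n,ν)) = ψ(m,μ) · conj(ψ(n,ν)). Then the trace norm of the realigned matrix equals the square of the trace norm of ψ: ‖RM(ρ_ψ)‖_tr = (‖ψ‖_tr)², i.e. the sum of the singular values of RM(ρ_ψ) is the square of the sum of the singular values of ψ. -/

import Mathlib

open Matrix Kronecker Complex ComplexOrder

noncomputable def traceNorm {m n : Type*} [Fintype m] [Fintype n] [DecidableEq n]
    (M : Matrix m n ℂ) : ℝ :=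
  ((Matrix.posSemidef_conjTranspose_mul_self M).1.eigenvectorUnitary.1 *
    diagonal (((↑) : ℝ → ℂ) ∘ (√·) ∘ (Matrix.posSemidef_conjTranspose_mul_self M).1.eigenvalues) *
    (star (Matrix.posSemidef_conjTranspose_mul_self M).1.eigenvectorUnitary : Matrix n n ℂ)).trace.re

def realign {NA NB : ℕ} (ρ : Matrix (Fin NA × Fin NB) (Fin NA × Fin NB) ℂ) :
    Matrix (Fin NA × Fin NA) (Fin NB × Fin NB) ℂ :=
  fun p q => ρ (p.1, q.1) (p.2, q.2)

def IsDensityMatrix {n : Type*} [Fintype n] (ρ : Matrix n n ℂ) : Prop :=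
  ρ.PosSemidef ∧ ρ.trace = 1

noncomputable def hsNorm {m n : Type*} [Fintype m] [Fintype n] (M : Matrix m n ℂ) : ℝ :=
  Real.sqrt (∑ i, ∑ j, ‖M i j‖ ^ 2)

noncomputable def hsInner {m n : Type*} [Fintype m] [Fintype n] (X Y : Matrix m n ℂ) : ℂ :=
  (Xᴴ * Y).trace

noncomputable def marginalA {NA NB : ℕ} (ρ : Matrix (Fin NA × Fin NB) (Fin NA × Fin NB) ℂ) :
    Matrix (Fin NA) (Fin NA) ℂ :=
  fun m n => ∑ μ, ρ (m, μ) (n, μ)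

noncomputable def marginalB {NA NB : ℕ} (ρ : Matrix (Fin NA × Fin NB) (Fin NA × Fin NB) ℂ) :
    Matrix (Fin NB) (Fin NB) ℂ :=
  fun μ ν => ∑ m, ρ (m, μ) (m, ν)

def SeparableState {NA NB : ℕ} (ρ : Matrix (Fin NA × Fin NB) (Fin NA × Fin NB) ℂ) : Prop :=
  ∃ (ι : Type) (s : Finset ι) (p : ι → ℝ)
    (ρA : ι → Matrix (Fin NA) (Fin NA) ℂ) (ρB : ι → Matrix (Fin NB) (Fin NB) ℂ),
    (∀ i ∈ s, 0 < p i) ∧ (∑ i ∈ s, p i = 1) ∧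
    (∀ i ∈ s, IsDensityMatrix (ρA i)) ∧ (∀ i ∈ s, IsDensityMatrix (ρB i)) ∧
    ρ = ∑ i ∈ s, (p i : ℂ) • (ρA i ⊗ₖ ρB i)

noncomputable def l2OpNorm {n : Type*} [Fintype n] [DecidableEq n] (M : Matrix n n ℂ) : ℝ :=
  ‖Matrix.toEuclideanCLM (𝕜 := ℂ) (n := n) M‖

/-! The realignment of `ρ_ψ` is `ψ ⊗ ψ̄`. The trace norm is multiplicative on Kronecker products
since `√((A ⊗ B)ᴴ(A ⊗ B)) = √(AᴴA) ⊗ √(BᴴB)`, and `ψ̄` has the trace norm of `ψ` since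
`ψ̄ᴴψ̄ = (ψᴴψ)ᵀ`. -/

open scoped MatrixOrder

namespace Matrix

variable {𝕜 m n : Type*} [RCLike 𝕜] [Fintype m] [Fintype n] [DecidableEq m] [DecidableEq n]

lemma PosSemidef.cfcSqrt_kronecker {A : Matrix m m 𝕜} {B : Matrix n n 𝕜}
    (hA : A.PosSemidef) (hB : B.PosSemidef) :
    CFC.sqrt (A ⊗ₖ B) = CFC.sqrt A ⊗ₖ CFC.sqrt B := by
  rw [CFC.sqrt_eq_iff _ _ (hA.kronecker hB).nonneg
    ((CFC.sqrt_nonneg A).posSemidef.kronecker (CFC.sqrt_nonneg B).posSemidef).nonneg,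
    ← mul_kronecker_mul, CFC.sqrt_mul_sqrt_self A hA.nonneg, CFC.sqrt_mul_sqrt_self B hB.nonneg]

lemma PosSemidef.cfcSqrt_transpose {A : Matrix n n 𝕜} (hA : A.PosSemidef) :
    CFC.sqrt Aᵀ = (CFC.sqrt A)ᵀ := by
  rw [CFC.sqrt_eq_iff _ _ hA.transpose.nonneg (CFC.sqrt_nonneg A).posSemidef.transpose.nonneg,
    ← transpose_mul, CFC.sqrt_mul_sqrt_self A hA.nonneg]

end Matrix

lemma Complex.re_mul_of_nonneg {a b : ℂ} (ha : 0 ≤ a) : (a * b).re = a.re * b.re := by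
  simp [Complex.mul_re, ← (Complex.nonneg_iff.mp ha).2]

section TraceNorm

variable {l m n p : Type*} [Fintype l] [Fintype m] [Fintype n] [Fintype p]
  [DecidableEq m] [DecidableEq p]

lemma traceNorm_eq_re_trace_cfcSqrt (M : Matrix n m ℂ) :
    traceNorm M = (CFC.sqrt (Mᴴ * M)).trace.re := by
  have hM := posSemidef_conjTranspose_mul_self M
  rw [CFC.sqrt_eq_cfc, cfc_nnreal_eq_real _ (Mᴴ * M) hM.nonneg, hM.1.cfc_eq, traceNorm]
  simp only [IsHermitian.cfc, Unitary.conjStarAlgAut_apply]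
  congr 5
  funext i
  simp [Real.coe_toNNReal', max_eq_left (hM.eigenvalues_nonneg i)]

lemma traceNorm_kronecker (A : Matrix l m ℂ) (B : Matrix n p ℂ) :
    traceNorm (A ⊗ₖ B) = traceNorm A * traceNorm B := by
  simp only [traceNorm_eq_re_trace_cfcSqrt, conjTranspose_kronecker, ← mul_kronecker_mul,
    (posSemidef_conjTranspose_mul_self A).cfcSqrt_kronecker (posSemidef_conjTranspose_mul_self B),
    trace_kronecker]
  exact Complex.re_mul_of_nonneg (CFC.sqrt_nonneg _).posSemidef.trace_nonneg

lemma traceNorm_map_conj (A : Matrix n m ℂ) :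
    traceNorm (A.map (starRingEnd ℂ)) = traceNorm A := by
  have hconj : (A.map (starRingEnd ℂ))ᴴ * A.map (starRingEnd ℂ) = (Aᴴ * A)ᵀ := by
    ext i j
    simp [mul_apply, mul_comm]
  rw [traceNorm_eq_re_trace_cfcSqrt, traceNorm_eq_re_trace_cfcSqrt, hconj,
    (posSemidef_conjTranspose_mul_self A).cfcSqrt_transpose, trace_transpose]

end TraceNorm

theorem traceNorm_realign_pure_state_general
    (NA NB : ℕ)
    (ψ : Matrix (Fin NA) (Fin NB) ℂ)
    (ρψ : Matrix (Fin NA × Fin NB) (Fin NA × Fin NB) ℂ)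
    (hρψ : ∀ m μ n ν, ρψ (m, μ) (n, ν) = ψ m μ * (starRingEnd ℂ) (ψ n ν)) :
    traceNorm (realign ρψ) = (traceNorm ψ) ^ 2 := by
  have hrealign : realign ρψ = ψ ⊗ₖ ψ.map (starRingEnd ℂ) := by
    ext ⟨m, n⟩ ⟨μ, ν⟩
    exact hρψ m μ n ν
  rw [hrealign, traceNorm_kronecker, traceNorm_map_conj, sq]

theorem traceNorm_realign_pure_state
    (NA NB : ℕ) (hNA : 2 ≤ NA) (hNB : 2 ≤ NB)
    (ψ : Matrix (Fin NA) (Fin NB) ℂ)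
    (ρψ : Matrix (Fin NA × Fin NB) (Fin NA × Fin NB) ℂ)
    (hρψ : ∀ m μ n ν, ρψ (m, μ) (n, ν) = ψ m μ * (starRingEnd ℂ) (ψ n ν)) :
    traceNorm (realign ρψ) = (traceNorm ψ) ^ 2 :=
  traceNorm_realign_pure_state_general NA NB ψ ρψ hρψ
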